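/- If C ∈ Σ_{x ∈ W} v Z[v] H_x is self-dual under the bar involution (d(C) = C), then C = 0. In other words, a bar-invariant element of the Hecke algebra all of whose coefficients in the standard basis lie in v Z[v] must vanish. -/

import Mathlib

/-! The bar involution is unitriangular on the standard basis:
`d(H_x) - H_x` lies in the span of the `H_z` with `ℓ(z) < ℓ(x)`, by induction on `ℓ(x)` starting
from `d(H_s) = H_s⁻¹ = H_s + v - v⁻¹`. So if `C = ∑ f_y H_y` and `x` has maximal length in the
support of `f`, the `H_x`-coefficient of `d(C)` is `f_x(v⁻¹)`, and `d(C) = C` gives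
`f_x(v⁻¹) = f_x(v)`. A Laurent polynomial in `v ℤ[v]` with this symmetry vanishes. -/

open LaurentPolynomial

/-- Membership in `v ℤ[v] ⊆ ℤ[v,v⁻¹]`. -/
def IsVPol (p : LaurentPolynomial ℤ) : Prop :=
  ∃ q : Polynomial ℤ, p = Polynomial.toLaurent q * T 1

/-- The coefficient of `v` in a Laurent polynomial. -/
def muCoeff (p : LaurentPolynomial ℤ) : ℤ := p.coeff 1

variable {B W : Type*} [Group W] {M : CoxeterMatrix B}

/-- The Bruhat order `≤` on `W`: generated by right multiplication by reflections which
increases the length. -/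
def BruhatLE (cs : CoxeterSystem M W) : W → W → Prop :=
  Relation.ReflTransGen
    (fun a b => (∃ t, cs.IsReflection t ∧ b = a * t) ∧ cs.length a < cs.length b)

/-- The strict Bruhat order on `W`. -/
def BruhatLT (cs : CoxeterSystem M W) (x y : W) : Prop :=
  BruhatLE cs x y ∧ x ≠ y

/-- The Hecke algebra of a Coxeter system, axiomatized: a `ℤ[v,v⁻¹]`-algebra with a basis
`T_x` indexed by `W` satisfying the braid and quadratic relations. -/
structure HeckeAlg (cs : CoxeterSystem M W) (A : Type*) [Ring A]
    [Algebra (LaurentPolynomial ℤ) A] where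
  Tb : Module.Basis W (LaurentPolynomial ℤ) A
  Tb_one : Tb 1 = 1
  Tb_mul : ∀ x y : W, cs.length (x * y) = cs.length x + cs.length y →
    Tb x * Tb y = Tb (x * y)
  Tb_quadratic : ∀ i : B, (Tb (cs.simple i) + 1) *
    (Tb (cs.simple i) - algebraMap (LaurentPolynomial ℤ) A (T (-2))) = 0

namespace HeckeAlg

variable {cs : CoxeterSystem M W} {A : Type*} [Ring A] [Algebra (LaurentPolynomial ℤ) A]

/-- The standard basis element `H_x = v^{ℓ(x)} T_x`. -/
noncomputable def H (ha : HeckeAlg cs A) (x : W) : A :=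
  algebraMap (LaurentPolynomial ℤ) A (T (cs.length x : ℤ)) * ha.Tb x

/-- The element `C_s = H_s + v` for a simple reflection `s`. -/
noncomputable def Cs (ha : HeckeAlg cs A) (i : B) : A :=
  ha.H (cs.simple i) + algebraMap (LaurentPolynomial ℤ) A (T 1)

/-- Data of the bar involution `d` on the Hecke algebra: a ring endomorphism with
`d(v) = v⁻¹` and `d(H_x) = (H_{x⁻¹})⁻¹`. -/
structure Bar (ha : HeckeAlg cs A) where
  d : A →+* A
  d_scalar : ∀ n : ℤ, d (algebraMap (LaurentPolynomial ℤ) A (T n)) =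
    algebraMap (LaurentPolynomial ℤ) A (T (-n))
  d_H_mul : ∀ x : W, d (ha.H x) * ha.H x⁻¹ = 1
  d_H_mul' : ∀ x : W, ha.H x⁻¹ * d (ha.H x) = 1

/-- `c` is a Kazhdan–Lusztig basis element at `x`: bar-invariant and congruent to `H_x`
modulo `∑_y v ℤ[v] H_y`. -/
def IsKL (ha : HeckeAlg cs A) (bar : ha.Bar) (x : W) (c : A) : Prop :=
  bar.d c = c ∧ ∃ f : W →₀ LaurentPolynomial ℤ, (∀ y, IsVPol (f y)) ∧
    c = ha.H x + f.sum fun y r => r • ha.H y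

end HeckeAlg

open scoped Classical
open HeckeAlg

namespace HeckeAlg

variable {cs : CoxeterSystem M W} {A : Type*} [Ring A] [Algebra ℤ[T;T⁻¹] A] (ha : HeckeAlg cs A)

theorem H_eq_T_smul_Tb (x : W) : ha.H x = (T (cs.length x : ℤ) : ℤ[T;T⁻¹]) • ha.Tb x := by
  rw [H, Algebra.smul_def]

theorem H_one : ha.H 1 = 1 := by
  rw [H_eq_T_smul_Tb, cs.length_one, ha.Tb_one, Nat.cast_zero, T_zero, one_smul]

theorem H_mul_H {x y : W} (h : cs.length (x * y) = cs.length x + cs.length y) :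
    ha.H x * ha.H y = ha.H (x * y) := by
  rw [H_eq_T_smul_Tb, H_eq_T_smul_Tb, H_eq_T_smul_Tb, smul_mul_smul_comm, ha.Tb_mul x y h,
    ← T_add, h, Nat.cast_add]

theorem H_simple_mul_H_simple_mul {x : W} {i : B} (hi : cs.IsLeftDescent x i) :
    ha.H (cs.simple i) * ha.H (cs.simple i * x) = ha.H x := by
  rw [cs.isLeftDescent_iff] at hi
  rw [ha.H_mul_H (by rw [cs.simple_mul_simple_cancel_left, cs.length_simple]; omega),
    cs.simple_mul_simple_cancel_left]

theorem H_simple_mul_self (i : B) :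
    ha.H (cs.simple i) * ha.H (cs.simple i)
      = (T (-1) - T 1 : ℤ[T;T⁻¹]) • ha.H (cs.simple i) + 1 := by
  rw [← sub_eq_zero, ← smul_zero (T 2 : ℤ[T;T⁻¹]), ← ha.Tb_quadratic i, H_eq_T_smul_Tb,
    cs.length_simple, Nat.cast_one, Algebra.algebraMap_eq_smul_one]
  simp only [add_mul, mul_sub, one_mul, mul_one, smul_mul_assoc, mul_smul_comm, smul_smul,
    smul_add, smul_sub]
  match_scalars <;> simp only [mul_one, sub_mul, ← T_add] <;> norm_num

theorem H_simple_add_mul_H_simple (i : B) :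
    (ha.H (cs.simple i) + algebraMap ℤ[T;T⁻¹] A (T 1 - T (-1))) * ha.H (cs.simple i) = 1 := by
  rw [add_mul, H_simple_mul_self, ← Algebra.smul_def]
  module

noncomputable def lengthLTSpan (n : ℕ) : Submodule ℤ[T;T⁻¹] A :=
  Submodule.span ℤ[T;T⁻¹] (ha.H '' {z | cs.length z < n})

theorem lengthLTSpan_mono {m n : ℕ} (h : m ≤ n) : ha.lengthLTSpan m ≤ ha.lengthLTSpan n :=
  Submodule.span_mono (Set.image_mono fun _ hz => lt_of_lt_of_le hz h)

theorem H_mem_lengthLTSpan {z : W} {n : ℕ} (h : cs.length z < n) : ha.H z ∈ ha.lengthLTSpan n :=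
  Submodule.subset_span ⟨z, h, rfl⟩

theorem H_simple_mul_H_mem_lengthLTSpan (i : B) (z : W) :
    ha.H (cs.simple i) * ha.H z ∈ ha.lengthLTSpan (cs.length z + 2) := by
  by_cases hi : cs.IsLeftDescent z i
  · rw [← ha.H_simple_mul_H_simple_mul hi, ← mul_assoc, H_simple_mul_self, add_mul, one_mul,
      smul_mul_assoc, ha.H_simple_mul_H_simple_mul hi]
    rw [cs.isLeftDescent_iff] at hi
    exact add_mem (Submodule.smul_mem _ _ (ha.H_mem_lengthLTSpan (by omega)))
      (ha.H_mem_lengthLTSpan (by omega))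
  · rw [cs.not_isLeftDescent_iff] at hi
    rw [ha.H_mul_H (by rw [hi, cs.length_simple, add_comm])]
    exact ha.H_mem_lengthLTSpan (by omega)

theorem H_simple_mul_mem_lengthLTSpan (i : B) {n : ℕ} {m : A} (hm : m ∈ ha.lengthLTSpan n) :
    ha.H (cs.simple i) * m ∈ ha.lengthLTSpan (n + 1) := by
  induction hm using Submodule.span_induction with
  | mem _ hz =>
    obtain ⟨z, hz, rfl⟩ := hz
    exact ha.lengthLTSpan_mono (by simpa using hz) (ha.H_simple_mul_H_mem_lengthLTSpan i z)
  | zero => simp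
  | add _ _ _ _ hx hy => rw [mul_add]; exact add_mem hx hy
  | smul r _ _ hx => rw [mul_smul_comm]; exact Submodule.smul_mem _ _ hx

theorem Tb_repr_eq_zero_of_mem_lengthLTSpan {n : ℕ} {m : A} (hm : m ∈ ha.lengthLTSpan n)
    {x : W} (hx : n ≤ cs.length x) : ha.Tb.repr m x = 0 := by
  have hspan : ha.lengthLTSpan n ≤ Submodule.span ℤ[T;T⁻¹] (ha.Tb '' {z | cs.length z < n}) := by
    rw [lengthLTSpan, Submodule.span_le]
    rintro _ ⟨z, hz, rfl⟩
    rw [H_eq_T_smul_Tb]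
    exact Submodule.smul_mem _ _ (Submodule.subset_span ⟨z, hz, rfl⟩)
  by_contra h
  exact (ha.Tb.mem_span_image.mp (hspan hm) (Finsupp.mem_support_iff.mpr h)).not_ge hx

theorem Tb_repr_sum_smul_H (f : W →₀ ℤ[T;T⁻¹]) (x : W) :
    ha.Tb.repr (f.sum fun y r => r • ha.H y) x = f x * T (cs.length x : ℤ) := by
  simp +contextual [Finsupp.sum, H_eq_T_smul_Tb, smul_smul, Finsupp.single_apply]

namespace Bar

variable {ha} (bar : ha.Bar)

theorem d_H_simple (i : B) :
    bar.d (ha.H (cs.simple i)) = ha.H (cs.simple i) + algebraMap ℤ[T;T⁻¹] A (T 1 - T (-1)) := by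
  have h := bar.d_H_mul' (cs.simple i)
  rw [cs.inv_simple] at h
  rw [← one_mul (bar.d _), ← ha.H_simple_add_mul_H_simple i, mul_assoc, h, mul_one]

theorem d_H_sub_H_mem_lengthLTSpan (x : W) :
    bar.d (ha.H x) - ha.H x ∈ ha.lengthLTSpan (cs.length x) := by
  induction hn : cs.length x using Nat.strong_induction_on generalizing x with
  | _ n ih =>
    rcases eq_or_ne x 1 with rfl | hx
    · rw [H_one, map_one, sub_self]
      exact zero_mem _
    obtain ⟨i, hi⟩ := cs.exists_leftDescent_of_ne_one hx
    set x' := cs.simple i * x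
    have hlen : cs.length x' + 1 = n := hn ▸ cs.isLeftDescent_iff.mp hi
    obtain ⟨e, he, hde⟩ : ∃ e ∈ ha.lengthLTSpan (cs.length x'), bar.d (ha.H x') = ha.H x' + e :=
      ⟨_, ih _ (by omega) x' rfl, (add_sub_cancel _ _).symm⟩
    have hexpand : bar.d (ha.H x) - ha.H x = ha.H (cs.simple i) * e
        + (T 1 - T (-1) : ℤ[T;T⁻¹]) • ha.H x' + (T 1 - T (-1) : ℤ[T;T⁻¹]) • e := by
      rw [← ha.H_simple_mul_H_simple_mul hi, map_mul, d_H_simple, hde, Algebra.smul_def,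
        Algebra.smul_def]
      noncomm_ring
    rw [hexpand]
    refine add_mem (add_mem ?_ ?_) ?_
    · exact hlen ▸ ha.H_simple_mul_mem_lengthLTSpan i he
    · exact Submodule.smul_mem _ _ (ha.H_mem_lengthLTSpan (by omega))
    · exact Submodule.smul_mem _ _ (ha.lengthLTSpan_mono (by omega) he)

theorem d_algebraMap (p : ℤ[T;T⁻¹]) :
    bar.d (algebraMap ℤ[T;T⁻¹] A p) = algebraMap ℤ[T;T⁻¹] A (invert p) := by
  induction p using LaurentPolynomial.induction_on' with
  | add p q hp hq => simp only [map_add, hp, hq]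
  | C_mul_T n a =>
    rw [map_mul, map_mul, map_mul, invert_C, invert_T, map_mul, bar.d_scalar,
      eq_intCast (C : ℤ →+* ℤ[T;T⁻¹]) a, map_intCast, map_intCast]

theorem d_smul (r : ℤ[T;T⁻¹]) (m : A) : bar.d (r • m) = invert r • bar.d m := by
  rw [Algebra.smul_def, map_mul, d_algebraMap, Algebra.smul_def]

theorem Tb_repr_d_sum_smul_H (f : W →₀ ℤ[T;T⁻¹]) {x : W}
    (hx : ∀ y ∈ f.support, cs.length y ≤ cs.length x) :
    ha.Tb.repr (bar.d (f.sum fun y r => r • ha.H y)) x = invert (f x) * T (cs.length x : ℤ) := by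
  set g := f.mapRange invert (map_zero _)
  have hg : (g.sum fun y r => r • ha.H y) = f.sum fun y r => invert r • ha.H y :=
    Finsupp.sum_mapRange_index fun _ => zero_smul _ _
  have herr : bar.d (f.sum fun y r => r • ha.H y) - (g.sum fun y r => r • ha.H y)
      ∈ ha.lengthLTSpan (cs.length x) := by
    rw [hg, Finsupp.sum, Finsupp.sum, map_sum, ← Finset.sum_sub_distrib]
    refine Submodule.sum_mem _ fun y hy => ?_
    rw [d_smul, ← smul_sub]
    exact Submodule.smul_mem _ _
      (ha.lengthLTSpan_mono (hx y hy) (bar.d_H_sub_H_mem_lengthLTSpan y))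
  rw [← sub_add_cancel (bar.d _) (g.sum _), map_add, Finsupp.add_apply,
    ha.Tb_repr_eq_zero_of_mem_lengthLTSpan herr le_rfl, zero_add, Tb_repr_sum_smul_H,
    Finsupp.mapRange_apply]

end Bar

end HeckeAlg

theorem IsVPol.coeff_eq_zero {p : ℤ[T;T⁻¹]} (hp : IsVPol p) {k : ℤ} (hk : k ≤ 0) :
    p.coeff k = 0 := by
  obtain ⟨q, rfl⟩ := hp
  rw [T, AddMonoidAlgebra.coeff_mul_single_apply, mul_one, coeff_toLaurent]
  apply Finsupp.mapDomain_of_notMem_range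
  rintro ⟨m, hm⟩
  have : (m : ℤ) = k - 1 := hm
  omega

theorem IsVPol.eq_zero_of_invert_eq {p : ℤ[T;T⁻¹]} (hp : IsVPol p) (h : invert p = p) :
    p = 0 := by
  ext k
  rcases le_or_gt k 0 with hk | hk
  · exact hp.coeff_eq_zero hk
  · rw [← h, invert_apply]
    exact hp.coeff_eq_zero (by omega)

/-- a bar-invariant element all of whose coefficients in the standard basis
lie in `v ℤ[v]` vanishes. -/
theorem stmt5 {B W : Type*} [Group W] {M : CoxeterMatrix B} (cs : CoxeterSystem M W)
    (A : Type*) [Ring A] [Algebra (LaurentPolynomial ℤ) A] (ha : HeckeAlg cs A)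
    (bar : ha.Bar) (c : A) (f : W →₀ LaurentPolynomial ℤ)
    (hf : ∀ y, IsVPol (f y)) (hc : c = f.sum fun y r => r • ha.H y)
    (hd : bar.d c = c) :
    c = 0 := by
  subst hc
  suffices f = 0 by simp [this]
  by_contra hf0
  obtain ⟨x, hx, hmax⟩ :=
    f.support.exists_max_image cs.length (Finsupp.support_nonempty_iff.mpr hf0)
  have hcoeff := congrArg (fun c => ha.Tb.repr c x) hd
  simp only [bar.Tb_repr_d_sum_smul_H f hmax, ha.Tb_repr_sum_smul_H] at hcoeff
  have hinv : invert (f x) = f x := (isUnit_T _).mul_right_cancel hcoeff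
  exact Finsupp.mem_support_iff.mp hx ((hf x).eq_zero_of_invert_eq hinv)
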